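/- arXiv:2405.20395 — 2 statements merged into one kernel-verified Lean document; each statement's English description precedes it below -/
import Mathlib

section
/- Let X be an uncountable set and G the group of countably supported bijections of X. The action of G on the set of injective sequences ℕ → X is transitive, and the stabilizer of any injective sequence x : ℕ → X is isomorphic to G itself. -/
/-- The group of bijections of `X` with countable support. -/
def countableSupport (X : Type*) : Subgroup (Equiv.Perm X) where
  carrier := {σ : Equiv.Perm X | {x : X | σ x ≠ x}.Countable}
  one_mem' := by
    have : {x : X | (1 : Equiv.Perm X) x ≠ x} = ∅ := by ext x; simp
    show {x : X | (1 : Equiv.Perm X) x ≠ x}.Countable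
    rw [this]; exact Set.countable_empty
  mul_mem' := by
    intro a b ha hb
    refine (ha.union hb).mono ?_
    intro x hx
    by_cases hbx : b x = x
    · exact Or.inl (by simpa [Equiv.Perm.mul_apply, hbx] using hx)
    · exact Or.inr hbx
  inv_mem' := by
    intro a ha
    refine ha.mono ?_
    intro x hx h
    exact hx (by nth_rewrite 1 [← h]; exact Equiv.symm_apply_apply a x)

/-- The stabilizer of a sequence `x : ℕ → X` in the group of countably supported
bijections of `X`. -/
def seqStabilizer {X : Type*} (x : ℕ → X) : Subgroup ↥(countableSupport X) where
  carrier := {g | ∀ n : ℕ, (g : Equiv.Perm X) (x n) = x n}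
  one_mem' := fun _ => rfl
  mul_mem' := by
    intro a b ha hb n
    show ((a : Equiv.Perm X) * (b : Equiv.Perm X)) (x n) = x n
    rw [Equiv.Perm.mul_apply, hb n, ha n]
  inv_mem' := by
    intro a ha n
    show ((a : Equiv.Perm X)⁻¹) (x n) = x n
    nth_rewrite 1 [← ha n]
    exact Equiv.symm_apply_apply (a : Equiv.Perm X) (x n)


/-!
To move `x` to `y`, choose an injective sequence `z` avoiding the countable set
`range x ∪ range y`, which exists because `X` is uncountable. The involution exchanging
`x n` with `z n` for every `n` has countable support, and so does the one exchanging
`y n` with `z n`; their product sends `x` to `y`.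

A permutation fixing every `x n` preserves `(range x)ᶜ` and is the identity off it, so the
stabilizer of `x` is the group of countably supported permutations of `(range x)ᶜ`. This
complement of a countable set has the cardinality of `X`, and transporting along a bijection
`(range x)ᶜ ≃ X` identifies the two groups.
-/

open Equiv Equiv.Perm Function Set Cardinal

section CountableSupport
variable {X α β : Type*}

theorem mem_countableSupport_of_subset {σ : Perm X} {s : Set X} (hs : s.Countable)
    (h : ∀ a, σ a ≠ a → a ∈ s) : σ ∈ countableSupport X :=
  hs.mono h

theorem permCongr_mem_countableSupport (e : α ≃ β) {σ : Perm α}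
    (hσ : σ ∈ countableSupport α) : e.permCongr σ ∈ countableSupport β :=
  mem_countableSupport_of_subset (hσ.image e) fun b hb =>
    ⟨e.symm b, fun h => hb (by simp [permCongr_apply, h]), e.apply_symm_apply b⟩

noncomputable def countableSupportCongr (e : α ≃ β) :
    countableSupport α ≃* countableSupport β where
  toFun σ := ⟨e.permCongr σ, permCongr_mem_countableSupport e σ.2⟩
  invFun τ := ⟨e.symm.permCongr τ, permCongr_mem_countableSupport e.symm τ.2⟩
  left_inv σ := Subtype.ext (e.permCongr.symm_apply_apply σ)
  right_inv τ := Subtype.ext (e.permCongr.apply_symm_apply τ)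
  map_mul' σ τ := Subtype.ext (e.permCongr_mul σ τ)

theorem ofSubtype_mem_countableSupport {p : X → Prop} [DecidablePred p] {σ : Perm (Subtype p)}
    (hσ : σ ∈ countableSupport (Subtype p)) : ofSubtype σ ∈ countableSupport X := by
  refine mem_countableSupport_of_subset (hσ.image Subtype.val) fun a ha => ?_
  by_cases hp : p a
  · exact ⟨⟨a, hp⟩, fun h => ha (by rw [ofSubtype_apply_of_mem σ hp, h]), rfl⟩
  · exact absurd (ofSubtype_apply_of_not_mem σ hp) ha

theorem subtypePerm_mem_countableSupport {p : X → Prop} {σ : Perm X} (h : ∀ a, p (σ a) ↔ p a)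
    (hσ : σ ∈ countableSupport X) : σ.subtypePerm h ∈ countableSupport (Subtype p) :=
  (hσ.preimage Subtype.val_injective).mono fun _ ha h' => ha (Subtype.ext h')

end CountableSupport

theorem Set.Countable.nonempty_compl_equiv {X : Type*} [Uncountable X] {s : Set X}
    (hs : s.Countable) : Nonempty (↥sᶜ ≃ X) :=
  Cardinal.eq.1 <| mk_compl_of_infinite s <|
    (le_aleph0_iff_set_countable.2 hs).trans_lt (aleph0_lt_mk_iff.2 ‹_›)

theorem exists_injective_forall_notMem {ι X : Type*} [Countable ι] [Uncountable X] {s : Set X}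
    (hs : s.Countable) : ∃ z : ι → X, Injective z ∧ ∀ i, z i ∉ s := by
  obtain ⟨e⟩ := hs.nonempty_compl_equiv
  have : Infinite ↥sᶜ := Infinite.of_injective e.symm e.symm.injective
  obtain ⟨f, hf⟩ := Countable.exists_injective_nat ι
  let g := Infinite.natEmbedding ↥sᶜ
  exact ⟨fun i => g (f i), Subtype.val_injective.comp (g.injective.comp hf), fun i => (g (f i)).2⟩

section SwapRanges
variable {ι X : Type*} {x z : ι → X}

open scoped Classical in
noncomputable def swapRangesFun (x z : ι → X) (a : X) : X :=
  if h : ∃ i, x i = a then z h.choose else if h : ∃ i, z i = a then x h.choose else a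

theorem swapRangesFun_left (hx : Injective x) (i : ι) : swapRangesFun x z (x i) = z i := by
  have h : ∃ j, x j = x i := ⟨i, rfl⟩
  rw [swapRangesFun, dif_pos h, hx h.choose_spec]

theorem swapRangesFun_right (hz : Injective z) (hxz : Disjoint (range x) (range z)) (i : ι) :
    swapRangesFun x z (z i) = x i := by
  have h : ¬ ∃ j, x j = z i := fun ⟨j, hj⟩ => disjoint_range_iff.1 hxz j i hj
  have h' : ∃ j, z j = z i := ⟨i, rfl⟩
  rw [swapRangesFun, dif_neg h, dif_pos h', hz h'.choose_spec]

theorem swapRangesFun_of_notMem {a : X} (hx : a ∉ range x) (hz : a ∉ range z) :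
    swapRangesFun x z a = a :=
  (dif_neg hx).trans (dif_neg hz)

theorem swapRangesFun_involutive (hx : Injective x) (hz : Injective z)
    (hxz : Disjoint (range x) (range z)) : Involutive (swapRangesFun x z) := by
  intro a
  by_cases hax : a ∈ range x
  · obtain ⟨i, rfl⟩ := hax
    rw [swapRangesFun_left hx, swapRangesFun_right hz hxz]
  by_cases haz : a ∈ range z
  · obtain ⟨i, rfl⟩ := haz
    rw [swapRangesFun_right hz hxz, swapRangesFun_left hx]
  rw [swapRangesFun_of_notMem hax haz, swapRangesFun_of_notMem hax haz]

noncomputable def swapRanges (hx : Injective x) (hz : Injective z)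
    (hxz : Disjoint (range x) (range z)) : Perm X :=
  (swapRangesFun_involutive hx hz hxz).toPerm _

theorem swapRanges_mem_countableSupport [Countable ι] (hx : Injective x) (hz : Injective z)
    (hxz : Disjoint (range x) (range z)) : swapRanges hx hz hxz ∈ countableSupport X :=
  mem_countableSupport_of_subset ((countable_range x).union (countable_range z)) fun a ha => by
    by_contra h
    rw [mem_union, not_or] at h
    exact ha (swapRangesFun_of_notMem h.1 h.2)

end SwapRanges

theorem exists_countableSupport_apply_eq {ι X : Type*} [Countable ι] [Uncountable X]
    {x y : ι → X} (hx : Injective x) (hy : Injective y) :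
    ∃ g : countableSupport X, ∀ i, (g : Perm X) (x i) = y i := by
  obtain ⟨z, hz, hzxy⟩ :=
    exists_injective_forall_notMem (ι := ι) ((countable_range x).union (countable_range y))
  have hxz : Disjoint (range x) (range z) :=
    disjoint_range_iff.2 fun i j h => hzxy j (h ▸ Or.inl ⟨i, rfl⟩)
  have hyz : Disjoint (range y) (range z) :=
    disjoint_range_iff.2 fun i j h => hzxy j (h ▸ Or.inr ⟨i, rfl⟩)
  refine ⟨⟨swapRanges hy hz hyz * swapRanges hx hz hxz,
    mul_mem (swapRanges_mem_countableSupport hy hz hyz)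
      (swapRanges_mem_countableSupport hx hz hxz)⟩, fun i => ?_⟩
  change swapRangesFun y z (swapRangesFun x z (x i)) = y i
  rw [swapRangesFun_left hx, swapRangesFun_right hz hyz]

section Stabilizer
variable {X : Type*}

theorem Equiv.Perm.apply_mem_range_iff {ι : Type*} {σ : Perm X} {x : ι → X}
    (h : ∀ i, σ (x i) = x i) (a : X) : σ a ∈ range x ↔ a ∈ range x := by
  constructor
  · rintro ⟨i, hi⟩
    exact ⟨i, σ.injective (by rw [h, hi])⟩
  · rintro ⟨i, rfl⟩
    exact ⟨i, (h i).symm⟩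

open scoped Classical

noncomputable def ofSubtypeComplRange (x : ℕ → X) :
    countableSupport ↥(range x)ᶜ →* seqStabilizer x where
  toFun σ := ⟨⟨ofSubtype σ.1, ofSubtype_mem_countableSupport σ.2⟩,
    fun n => ofSubtype_apply_of_not_mem σ.1 (by simp)⟩
  map_one' := by ext; simp
  map_mul' σ τ := by ext; simp

theorem ofSubtypeComplRange_bijective (x : ℕ → X) : Bijective (ofSubtypeComplRange x) := by
  refine ⟨fun σ τ h => Subtype.ext (ofSubtype_injective (congrArg (fun g => g.1.1) h)), ?_⟩
  rintro ⟨⟨g, hg⟩, hgx⟩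
  have hcompl : ∀ a, g a ∈ (range x)ᶜ ↔ a ∈ (range x)ᶜ :=
    fun a => (g.apply_mem_range_iff hgx a).not
  have hsupp : ∀ a, g a ≠ a → a ∈ (range x)ᶜ := by
    rintro a ha ⟨n, rfl⟩
    exact ha (hgx n)
  exact ⟨⟨g.subtypePerm hcompl, subtypePerm_mem_countableSupport hcompl hg⟩,
    Subtype.ext (Subtype.ext (ofSubtype_subtypePerm hcompl hsupp))⟩

noncomputable def seqStabilizerEquivComplRange (x : ℕ → X) :
    seqStabilizer x ≃* countableSupport ↥(range x)ᶜ :=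
  (MulEquiv.ofBijective _ (ofSubtypeComplRange_bijective x)).symm

end Stabilizer

/-- The group `G` of countably supported bijections of an uncountable set `X` acts
transitively on injective sequences `ℕ → X`, and the stabilizer of any injective
sequence is isomorphic to `G` itself. -/
theorem stmt4 {X : Type*} [Uncountable X] (x y : ℕ → X)
    (hx : Function.Injective x) (hy : Function.Injective y) :
    (∃ g : ↥(countableSupport X), ∀ n : ℕ, (g : Equiv.Perm X) (x n) = y n) ∧
    Nonempty (↥(seqStabilizer x) ≃* ↥(countableSupport X)) := by
  obtain ⟨e⟩ := (countable_range x).nonempty_compl_equiv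
  exact ⟨exists_countableSupport_apply_eq hx hy,
    ⟨(seqStabilizerEquivComplRange x).trans (countableSupportCongr e)⟩⟩
end

section
/- Let G be the group of bijections of an uncountable set X with countable support. Then every homogeneous quasimorphism on G is identically zero. -/
structure IsHomogeneousQuasimorphism {G : Type*} [Group G] (φ : G → ℝ) : Prop where
  exists_abs_defect_le : ∃ C : ℝ, ∀ g h : G, |φ (g * h) - φ g - φ h| ≤ C
  map_zpow : ∀ (g : G) (n : ℤ), φ (g ^ n) = n * φ g

theorem eq_zero_of_forall_abs_nat_mul_le {x C : ℝ} (h : ∀ n : ℕ, |n * x| ≤ C) : x = 0 := by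
  by_contra hx
  have hx' : 0 < |x| := abs_pos.mpr hx
  obtain ⟨n, hn⟩ := exists_nat_gt (C / |x|)
  have hnC : (n : ℝ) * |x| ≤ C := by simpa [abs_mul] using h n
  rw [div_lt_iff₀ hx'] at hn
  linarith

namespace IsHomogeneousQuasimorphism

variable {G : Type*} [Group G] {φ : G → ℝ}

theorem map_pow (hφ : IsHomogeneousQuasimorphism φ) (g : G) (n : ℕ) :
    φ (g ^ n) = n * φ g := by
  simpa using hφ.map_zpow g n

theorem map_inv (hφ : IsHomogeneousQuasimorphism φ) (g : G) : φ g⁻¹ = -φ g := by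
  simpa using hφ.map_zpow g (-1)

theorem map_conj (hφ : IsHomogeneousQuasimorphism φ) (u v : G) : φ (u⁻¹ * v * u) = φ v := by
  obtain ⟨C, hC⟩ := hφ.exists_abs_defect_le
  suffices φ (u⁻¹ * v * u) - φ v = 0 by linarith
  refine eq_zero_of_forall_abs_nat_mul_le (C := C + C) fun n => ?_
  have hpow : (u⁻¹ * v * u) ^ n = u⁻¹ * v ^ n * u := by
    simpa using conj_pow (a := u⁻¹) (b := v) (i := n)
  have hsplit : (n : ℝ) * (φ (u⁻¹ * v * u) - φ v) =
      (φ (u⁻¹ * v ^ n * u) - φ (u⁻¹ * v ^ n) - φ u) +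
        (φ (u⁻¹ * v ^ n) - φ u⁻¹ - φ (v ^ n)) := by
    rw [hφ.map_inv, hφ.map_pow, ← hpow, hφ.map_pow]
    ring
  rw [hsplit]
  exact (abs_add_le _ _).trans (add_le_add (hC _ _) (hC _ _))

theorem map_mul_of_commute (hφ : IsHomogeneousQuasimorphism φ) {u v : G} (huv : Commute u v) :
    φ (u * v) = φ u + φ v := by
  obtain ⟨C, hC⟩ := hφ.exists_abs_defect_le
  suffices φ (u * v) - φ u - φ v = 0 by linarith
  refine eq_zero_of_forall_abs_nat_mul_le (C := C) fun n => ?_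
  have hsplit : (n : ℝ) * (φ (u * v) - φ u - φ v) =
      φ (u ^ n * v ^ n) - φ (u ^ n) - φ (v ^ n) := by
    rw [← huv.mul_pow, hφ.map_pow, hφ.map_pow, hφ.map_pow]
    ring
  rw [hsplit]
  exact hC _ _

theorem eq_zero_of_conj_eq_mul (hφ : IsHomogeneousQuasimorphism φ) {a b t : G}
    (hconj : t⁻¹ * b * t = a * b) (hab : Commute a b) : φ a = 0 := by
  have := hφ.map_conj t b
  rw [hconj, hφ.map_mul_of_commute hab] at this
  linarith

end IsHomogeneousQuasimorphism

namespace Equiv.Perm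

variable {ι α : Type*}

def levelwise (f : ι → Perm α) : Perm (ι × α) :=
  prodShear (Equiv.refl ι) f

@[simp]
theorem levelwise_apply (f : ι → Perm α) (p : ι × α) : levelwise f p = (p.1, f p.1 p.2) :=
  rfl

theorem levelwise_mul (f f' : ι → Perm α) : levelwise f * levelwise f' = levelwise (f * f') :=
  rfl

theorem commute_levelwise {f f' : ι → Perm α} (h : ∀ i, Commute (f i) (f' i)) :
    Commute (levelwise f) (levelwise f') := by
  rw [Commute, SemiconjBy, levelwise_mul, levelwise_mul]
  exact congrArg levelwise (funext fun i => (h i).eq)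

theorem prodCongr_inv_mul_levelwise_mul_prodCongr (e : Perm ι) (f : ι → Perm α) :
    (prodCongr e (Equiv.refl α))⁻¹ * levelwise f * prodCongr e (Equiv.refl α) =
      levelwise (f ∘ e) := by
  ext p <;> simp

theorem exists_conj_eq_mul_commute_levelwise_zero (g : Perm α) :
    ∃ ψ τ : Perm (ℤ × α),
      τ⁻¹ * ψ * τ = levelwise (Set.mulIndicator {0} fun _ => g) * ψ ∧
        Commute (levelwise (Set.mulIndicator {0} fun _ => g)) ψ := by
  refine ⟨levelwise (Set.mulIndicator (Set.Ici 1) fun _ => g),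
    prodCongr (Equiv.addRight 1) (Equiv.refl α), ?_, ?_⟩
  · rw [prodCongr_inv_mul_levelwise_mul_prodCongr, levelwise_mul]
    congr 1
    funext n
    simp only [Function.comp_apply, Equiv.coe_addRight, Pi.mul_apply, Set.mulIndicator_apply,
      Set.mem_Ici, Set.mem_singleton_iff]
    split_ifs <;> first | omega | simp
  · refine commute_levelwise fun n => ?_
    simp only [Set.mulIndicator_apply]
    split_ifs <;> simp

end Equiv.Perm

section

open Equiv Equiv.Perm

variable {X : Type*}

theorem exists_injective_int_prod_of_countable {S : Set X} (hS : S.Countable)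
    (hSc : Sᶜ.Infinite) :
    ∃ E : ℤ × S → X, Function.Injective E ∧ (∀ s : S, E (0, s) = s) ∧
      ∀ p : ℤ × S, p.1 ≠ 0 → E p ∉ S := by
  have : Countable S := hS.to_subtype
  have : Infinite (Sᶜ : Set X) := hSc.to_subtype
  let j : ℤ × S ↪ (Sᶜ : Set X) :=
    (nonempty_embedding_nat _).some.trans (Infinite.natEmbedding _)
  classical
  refine ⟨fun p => if p.1 = 0 then p.2 else j p, ?_, fun s => if_pos rfl, fun p hp => ?_⟩
  · rintro ⟨n, s⟩ ⟨m, r⟩ h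
    dsimp only at h
    split_ifs at h with hn hm hm
    · exact Prod.ext (hn.trans hm.symm) (Subtype.ext h)
    · exact ((j _).2 (h ▸ s.2)).elim
    · exact ((j _).2 (h ▸ r.2)).elim
    · exact j.injective (Subtype.ext h)
  · simp only [if_neg hp]
    exact (j p).2

theorem extendDomain_mem_countableSupport {α : Type*} [Countable α] {p : X → Prop}
    [DecidablePred p] (e : Perm α) (f : α ≃ Subtype p) :
    e.extendDomain f ∈ countableSupport X := by
  have : Countable (Subtype p) := f.symm.injective.countable
  refine (Set.countable_coe_iff.mp this).mono fun x hx => ?_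
  by_contra hpx
  exact hx (extendDomain_apply_not_subtype e f hpx)

theorem extendDomain_levelwise_eq {g : Perm X} {S : Set X} (hgS : ∀ x, g x ∈ S ↔ x ∈ S)
    (hsupp : ∀ x ∉ S, g x = x) {E : ℤ × S → X} (hE : Function.Injective E)
    (hE0 : ∀ s, E (0, s) = s) (hEne : ∀ p : ℤ × S, p.1 ≠ 0 → E p ∉ S)
    [DecidablePred (· ∈ Set.range E)] :
    (levelwise (Set.mulIndicator {0} fun _ => g.subtypePerm hgS)).extendDomain
      (ofInjective E hE) = g := by
  ext x
  by_cases hx : x ∈ Set.range E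
  · obtain ⟨⟨n, s⟩, rfl⟩ := hx
    have himage := extendDomain_apply_image
      (levelwise (Set.mulIndicator {0} fun _ => g.subtypePerm hgS)) (ofInjective E hE) (n, s)
    simp only [ofInjective_apply] at himage
    rw [himage]
    by_cases hn : n = 0
    · subst hn
      simp [hE0]
    · simp [hn, hsupp _ (hEne (n, s) hn)]
  · have hxS : x ∉ S := fun h => hx ⟨(0, ⟨x, h⟩), hE0 _⟩
    rw [extendDomain_apply_not_subtype _ _ hx, hsupp x hxS]

theorem countableSupport.exists_conj_eq_mul_commute [Uncountable X] (a : countableSupport X) :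
    ∃ b t : countableSupport X, t⁻¹ * b * t = a * b ∧ Commute a b := by
  classical
  obtain ⟨g, hg⟩ := a
  set S : Set X := {x | g x ≠ x}
  have hS : S.Countable := hg
  have hSc : Sᶜ.Infinite := fun h =>
    Set.not_countable_univ (Set.union_compl_self S ▸ hS.union h.countable)
  obtain ⟨E, hE, hE0, hEne⟩ := exists_injective_int_prod_of_countable hS hSc
  have : Countable S := hS.to_subtype
  let F := (extendDomainHom (ofInjective E hE)).codRestrict (countableSupport X)
    fun e => extendDomain_mem_countableSupport e _
  have hgS : ∀ x, g x ∈ S ↔ x ∈ S := fun x => g.injective.ne_iff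
  obtain ⟨ψ, τ, hconj, hcomm⟩ := exists_conj_eq_mul_commute_levelwise_zero (g.subtypePerm hgS)
  have hF : F (levelwise (Set.mulIndicator {0} fun _ => g.subtypePerm hgS)) = ⟨g, hg⟩ :=
    Subtype.ext (extendDomain_levelwise_eq hgS (fun _ hx => not_not.mp hx) hE hE0 hEne)
  refine ⟨F ψ, F τ, ?_, ?_⟩
  · rw [← hF, ← map_inv, ← map_mul, ← map_mul, hconj, map_mul]
  · rw [← hF]
    exact hcomm.map F

end

/-- Every homogeneous quasimorphism on the group of countably supported bijections
of an uncountable set vanishes identically. -/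
theorem stmt13 {X : Type*} [Uncountable X]
    (φ : ↥(countableSupport X) → ℝ)
    (hq : ∃ C : ℝ, ∀ g h : ↥(countableSupport X), |φ (g * h) - φ g - φ h| ≤ C)
    (hhom : ∀ g : ↥(countableSupport X), ∀ n : ℤ, φ (g ^ n) = n * φ g) :
    ∀ g : ↥(countableSupport X), φ g = 0 := by
  intro a
  obtain ⟨b, t, hconj, hab⟩ := countableSupport.exists_conj_eq_mul_commute a
  exact IsHomogeneousQuasimorphism.eq_zero_of_conj_eq_mul ⟨hq, hhom⟩ hconj hab
end
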